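/- Let V_1, ..., V_{n+1} be i.i.d. real-valued random variables with a continuous distribution (so ties occur with probability zero), and let q̂ be the ⌈(n+1)(1-α)⌉-th order statistic of V_1, ..., V_n with ⌈(n+1)(1-α)⌉ ≤ n. Then 1 - α ≤ P(V_{n+1} ≤ q̂) ≤ 1 - α + 1/(n+1). -/

import Mathlib

open MeasureTheory
open scoped ENNReal

/-- The `k`-th order statistic (1-indexed) of the values `v 0, ..., v (n-1)`. -/
noncomputable def orderStat {n : ℕ} (v : Fin n → ℝ) (k : ℕ) : ℝ :=
  (Multiset.sort (Multiset.ofList (List.ofFn v)) (· ≤ ·)).getD (k - 1) 0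

section Aux

theorem SCC.sorted_count_le {l : List ℝ} (hl : l.Pairwise (· ≤ ·)) {m : ℕ} (hm : m < l.length)
    (y : ℝ) : y ≤ l[m] ↔ l.countP (fun a => a < y) ≤ m := by
  constructor
  · intro h
    have hdrop : (l.drop m).countP (fun a => a < y) = 0 := by
      rw [List.countP_eq_zero]
      intro a ha
      obtain ⟨i, hi, rfl⟩ := List.getElem_of_mem ha
      have hil : m + i < l.length := by rw [List.length_drop] at hi; omega
      have hg : (List.drop m l)[i] = l[m + i]'hil := List.getElem_drop ..
      rw [hg]
      have : l[m] ≤ l[m + i]'hil := by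
        apply hl.rel_get_of_le (a := ⟨m, hm⟩) (b := ⟨m + i, by omega⟩)
        exact Fin.mk_le_mk.mpr (by omega)
      simp only [decide_eq_true_eq]
      push_neg
      linarith
    calc l.countP (fun a => a < y)
        = (l.take m).countP (fun a => a < y) + (l.drop m).countP (fun a => a < y) := by
          rw [← List.countP_append, List.take_append_drop]
      _ ≤ m := by rw [hdrop]; simpa using (List.length_take_le m l).trans_eq rfl |>.trans' (List.countP_le_length)
  · intro h
    by_contra hy
    push_neg at hy
    have : (l.take (m+1)).countP (fun a => a < y) = (l.take (m+1)).length := by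
      rw [List.countP_eq_length]
      intro a ha
      rw [List.mem_take_iff_getElem] at ha
      obtain ⟨i, hi, rfl⟩ := ha
      have : l[i] ≤ l[m] := by
        apply hl.rel_get_of_le (a := ⟨i, by omega⟩) (b := ⟨m, hm⟩)
        exact Fin.mk_le_mk.mpr (by omega)
      simp only [decide_eq_true_eq]
      linarith
    have h2 : (l.take (m+1)).length = m+1 := by
      rw [List.length_take]; omega
    have h3 : (l.take (m+1)).countP (fun a => a < y) ≤ l.countP (fun a => a < y) :=
      (List.take_sublist _ _).countP_le
    omega

theorem SCC.filter_length_eq_sum {β : Type*} (p : β → Prop) [DecidablePred p] (l : List β) :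
    (List.filter (fun b => p b) l).length = (l.map (fun i => if p i then 1 else 0)).sum := by
  induction l with
  | nil => simp
  | cons a t ih => by_cases h : p a <;> simp [List.filter_cons, h, ih, Nat.add_comm]

theorem SCC.countP_ofFn {n : ℕ} (v : Fin n → ℝ) (y : ℝ) :
    (List.ofFn v).countP (fun a => a < y) = (Finset.univ.filter (fun i => v i < y)).card := by
  rw [List.ofFn_eq_map, List.countP_map, Finset.card_filter, List.countP_eq_length_filter]
  rw [Fin.sum_univ_def, ← SCC.filter_length_eq_sum (fun i => v i < y) (List.finRange n)]
  rfl

theorem SCC.le_orderStat_iff {n : ℕ} (v : Fin n → ℝ) {k : ℕ} (hk1 : 1 ≤ k) (hkn : k ≤ n)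
    (y : ℝ) :
    y ≤ orderStat v k ↔ (Finset.univ.filter (fun i => v i < y)).card < k := by
  set l := Multiset.sort (Multiset.ofList (List.ofFn v)) (· ≤ ·) with hl
  have hlen : l.length = n := by
    rw [hl, Multiset.length_sort]; simp
  have hsort : l.Pairwise (· ≤ ·) := Multiset.pairwise_sort _ _
  have hm : k - 1 < l.length := by omega
  have hgd : orderStat v k = l[k-1] := List.getD_eq_getElem l 0 hm
  have hperm : l.Perm (List.ofFn v) := Multiset.coe_eq_coe.mp (Multiset.sort_eq _ _)
  rw [hgd, SCC.sorted_count_le hsort hm, hperm.countP_eq, SCC.countP_ofFn]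
  omega

/-- The rank of coordinate `j`: the number of coordinates strictly below `x j`. -/
noncomputable def SCC.rk {m : ℕ} (x : Fin m → ℝ) (j : Fin m) : ℕ :=
  (Finset.univ.filter fun i => x i < x j).card

namespace SCC

theorem rk_lt {m : ℕ} (x : Fin m → ℝ) (j : Fin m) : rk x j < m := by
  have : (Finset.univ.filter fun i => x i < x j) ⊆ Finset.univ.erase j := by
    intro i hi
    simp only [Finset.mem_filter] at hi
    exact Finset.mem_erase.mpr ⟨fun h => by subst h; exact lt_irrefl _ hi.2, Finset.mem_univ _⟩
  calc rk x j ≤ (Finset.univ.erase j).card := Finset.card_le_card this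
    _ < m := by
        rw [Finset.card_erase_of_mem (Finset.mem_univ _)]
        simp [Finset.card_univ]; have := j.pos; omega

theorem rk_inj {m : ℕ} {x : Fin m → ℝ} (hx : Function.Injective x) :
    Function.Injective (rk x) := by
  have key : ∀ j1 j2 : Fin m, x j1 < x j2 → rk x j1 < rk x j2 := by
    intro j1 j2 h
    apply Finset.card_lt_card
    constructor
    · intro i hi
      simp only [Finset.mem_filter, Finset.mem_univ, true_and] at *
      linarith
    · intro hsub
      have : j1 ∈ Finset.univ.filter fun i => x i < x j2 := by
        simp only [Finset.mem_filter, Finset.mem_univ, true_and]; exact h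
      have := hsub this
      simp only [Finset.mem_filter, Finset.mem_univ, true_and] at this
      exact lt_irrefl _ this
  intro j1 j2 hr
  by_contra hne
  rcases lt_trichotomy (x j1) (x j2) with h | h | h
  · exact absurd hr (Nat.ne_of_lt (key _ _ h))
  · exact hne (hx h)
  · exact absurd hr.symm (Nat.ne_of_lt (key _ _ h))

theorem rk_existsUnique {m : ℕ} {x : Fin m → ℝ} (hx : Function.Injective x)
    {r : ℕ} (hr : r < m) : ∃! j : Fin m, rk x j = r := by
  have hinj : Function.Injective (fun j => (⟨rk x j, rk_lt x j⟩ : Fin m)) := by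
    intro a b h
    exact rk_inj hx (by simpa [Fin.mk.injEq] using h)
  have hsurj := Finite.surjective_of_injective hinj
  obtain ⟨j, hj⟩ := hsurj ⟨r, hr⟩
  refine ⟨j, by simpa [Fin.mk.injEq] using hj, fun j' hj' => ?_⟩
  exact rk_inj hx (by simp [hj', by simpa [Fin.mk.injEq] using hj])

theorem measurable_rk {m : ℕ} (j : Fin m) : Measurable (fun x : Fin m → ℝ => rk x j) := by
  have : (fun x : Fin m → ℝ => rk x j)
      = fun x => ∑ i : Fin m, if x i < x j then 1 else 0 := by
    ext x; rw [rk, Finset.card_filter]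
  rw [this]
  exact Finset.measurable_sum _ fun i _ => Measurable.ite
    (measurableSet_lt (measurable_pi_apply i) (measurable_pi_apply j))
    measurable_const measurable_const

theorem measurableSet_rk_eq {m : ℕ} (j : Fin m) (r : ℕ) :
    MeasurableSet {x : Fin m → ℝ | rk x j = r} :=
  measurable_rk j (measurableSet_singleton r)

theorem perm_preserving {m : ℕ} (μ : Measure ℝ) [IsProbabilityMeasure μ]
    (e : Equiv.Perm (Fin m)) :
    MeasurePreserving (fun x : Fin m → ℝ => x ∘ ⇑e)
      (Measure.pi fun _ : Fin m => μ) (Measure.pi fun _ : Fin m => μ) := by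
  have h := (measurePreserving_piCongrLeft (fun _ : Fin m => μ) e).symm
    (MeasurableEquiv.piCongrLeft (fun _ : Fin m => ℝ) e)
  convert h using 1
  ext x i
  simp [MeasurableEquiv.piCongrLeft, Equiv.piCongrLeft_symm_apply]

theorem card_filter_comp_equiv {ι : Type*} [Fintype ι] [DecidableEq ι] (e : ι ≃ ι)
    (p : ι → Prop) [DecidablePred p] :
    (Finset.univ.filter fun i => p (e i)).card = (Finset.univ.filter p).card := by
  apply Finset.card_bij (fun a _ => e a)
  · intro a ha; simp only [Finset.mem_filter, Finset.mem_univ, true_and] at *; exact ha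
  · intro a _ b _ h; exact e.injective h
  · intro b hb
    refine ⟨e.symm b, ?_, by simp⟩
    simp only [Finset.mem_filter, Finset.mem_univ, true_and, Equiv.apply_symm_apply] at *
    exact hb

theorem rk_comp_perm {m : ℕ} (x : Fin m → ℝ) (e : Equiv.Perm (Fin m)) (j : Fin m) :
    rk (x ∘ ⇑e) j = rk x (e j) := by
  unfold rk
  exact card_filter_comp_equiv e (fun i => x i < x (e j))

theorem pair_null {n : ℕ} (μ : Measure ℝ) [IsProbabilityMeasure μ] (hcont : ∀ x : ℝ, μ {x} = 0)
    (c : Fin n) :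
    Measure.pi (fun _ : Fin (n+1) => μ) {x | x (Fin.last n) = x c.castSucc} = 0 := by
  have mp := measurePreserving_piFinSuccAbove (fun _ : Fin (n+1) => μ) (Fin.last n)
  set t : Set (ℝ × (Fin n → ℝ)) := {p | p.1 = p.2 c} with ht
  have htm : MeasurableSet t :=
    measurableSet_eq_fun measurable_fst ((measurable_pi_apply c).comp measurable_snd)
  have hpre : (MeasurableEquiv.piFinSuccAbove (fun _ : Fin (n+1) => ℝ) (Fin.last n)) ⁻¹' t
      = {x | x (Fin.last n) = x c.castSucc} := by
    ext x
    simp [MeasurableEquiv.piFinSuccAbove_apply, ht, Fin.succAbove_last, Fin.init]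
  rw [← hpre, mp.measure_preimage htm.nullMeasurableSet]
  rw [Measure.prod_apply_symm htm]
  have : ∀ y : Fin n → ℝ, μ ((fun x => (x, y)) ⁻¹' t) = 0 := by
    intro y
    have : (fun x : ℝ => (x, y)) ⁻¹' t = {y c} := by ext a; simp [ht]
    rw [this]; exact hcont _
  simp only [this]
  simp

theorem ties_null {n : ℕ} (μ : Measure ℝ) [IsProbabilityMeasure μ] (hcont : ∀ x : ℝ, μ {x} = 0) :
    Measure.pi (fun _ : Fin (n+1) => μ) {x | ¬ Function.Injective x} = 0 := by
  set π := Measure.pi (fun _ : Fin (n+1) => μ)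
  have hpair : ∀ i j : Fin (n+1), i ≠ j → π {x | x i = x j} = 0 := by
    have hlast : ∀ j : Fin (n+1), j ≠ Fin.last n → π {x | x (Fin.last n) = x j} = 0 := by
      intro j hj
      obtain ⟨c, rfl⟩ := Fin.exists_castSucc_eq.mpr hj
      exact pair_null μ hcont c
    intro i j hij
    by_cases hi : i = Fin.last n
    · subst hi; exact hlast j (Ne.symm hij)
    · have he := (perm_preserving μ (Equiv.swap i (Fin.last n))).measure_preimage
        (s := {x | x (Fin.last n) = x ((Equiv.swap i (Fin.last n)) j)})
      by_cases hjl : j = Fin.last n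
      · subst hjl
        have : {x : Fin (n+1) → ℝ | x i = x (Fin.last n)}
            = {x | x (Fin.last n) = x i} := by ext x; simp [eq_comm]
        rw [this]; exact hlast i hi
      · have hms : MeasurableSet {x : Fin (n+1) → ℝ | x (Fin.last n)
            = x ((Equiv.swap i (Fin.last n)) j)} :=
          measurableSet_eq_fun (measurable_pi_apply _) (measurable_pi_apply _)
        have hswapj : (Equiv.swap i (Fin.last n)) j = j := by
          rw [Equiv.swap_apply_of_ne_of_ne hij.symm hjl]
        have hpre : (fun x : Fin (n+1) → ℝ => x ∘ ⇑(Equiv.swap i (Fin.last n))) ⁻¹'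
            {x | x (Fin.last n) = x ((Equiv.swap i (Fin.last n)) j)}
            = {x | x i = x j} := by
          ext x
          simp only [Set.mem_preimage, Set.mem_setOf_eq, Function.comp_apply, hswapj,
            Equiv.swap_apply_right, Equiv.swap_apply_of_ne_of_ne hij.symm hjl]
        rw [← hpre, he hms.nullMeasurableSet, hswapj]
        exact hlast j hjl
  have hsub : {x : Fin (n+1) → ℝ | ¬ Function.Injective x}
      ⊆ ⋃ i, ⋃ j, ⋃ (_ : i ≠ j), {x | x i = x j} := by
    intro x hx
    simp only [Function.Injective, not_forall] at hx
    obtain ⟨i, j, hxij, hij⟩ := hx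
    exact Set.mem_iUnion.mpr ⟨i, Set.mem_iUnion.mpr ⟨j, Set.mem_iUnion.mpr ⟨hij, hxij⟩⟩⟩
  refine measure_mono_null hsub ?_
  exact measure_iUnion_null fun i => measure_iUnion_null fun j => measure_iUnion_null fun hij =>
    hpair i j hij

theorem rk_eq_measure {n : ℕ} (μ : Measure ℝ) [IsProbabilityMeasure μ]
    (hcont : ∀ x : ℝ, μ {x} = 0) {r : ℕ} (hr : r < n + 1) :
    Measure.pi (fun _ : Fin (n+1) => μ) {x | rk x (Fin.last n) = r} = (((n+1:ℕ):ℝ≥0∞))⁻¹ := by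
  set π := Measure.pi (fun _ : Fin (n+1) => μ) with hπ
  have hprob : IsProbabilityMeasure π := by rw [hπ]; infer_instance
  have hsame : ∀ j : Fin (n+1), π {x | rk x j = r} = π {x | rk x (Fin.last n) = r} := by
    intro j
    have he := (perm_preserving μ (Equiv.swap j (Fin.last n))).measure_preimage
      (measurableSet_rk_eq (m := n+1) (Fin.last n) r).nullMeasurableSet
    have hpre : (fun x : Fin (n+1) → ℝ => x ∘ ⇑(Equiv.swap j (Fin.last n))) ⁻¹'
        {x | rk x (Fin.last n) = r} = {x | rk x j = r} := by
      ext x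
      simp only [Set.mem_preimage, Set.mem_setOf_eq, rk_comp_perm, Equiv.swap_apply_right]
    rw [hpre] at he
    rw [hπ]
    exact he
  set D : Set (Fin (n+1) → ℝ) := {x | Function.Injective x} with hD
  have hDc : π Dᶜ = 0 := ties_null μ hcont
  have hDm : MeasurableSet D := by
    have hEq : D = ⋂ i, ⋂ j, ⋂ (_ : i ≠ j), {x : Fin (n+1) → ℝ | x i ≠ x j} := by
      ext x
      simp only [hD, Set.mem_setOf_eq, Set.mem_iInter]
      constructor
      · intro hx i j hij hxe
        exact hij (hx hxe)
      · intro hx i j hxe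
        by_contra hij
        exact hx i j hij hxe
    rw [hEq]
    exact MeasurableSet.iInter fun i => MeasurableSet.iInter fun j =>
      MeasurableSet.iInter fun _ => (measurableSet_eq_fun (measurable_pi_apply i)
        (measurable_pi_apply j)).compl
  have hcover : D = ⋃ j ∈ (Finset.univ : Finset (Fin (n+1))), ({x | rk x j = r} ∩ D) := by
    ext x
    simp only [Set.mem_iUnion, Finset.mem_univ, Set.mem_inter_iff, Set.mem_setOf_eq,
      exists_and_left, exists_prop, true_and]
    constructor
    · intro hx
      obtain ⟨j, hj, _⟩ := rk_existsUnique hx hr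
      exact ⟨j, hj, hx⟩
    · rintro ⟨j, _, hx⟩; exact hx
  have hdisj : (↑(Finset.univ : Finset (Fin (n+1))) : Set (Fin (n+1))).PairwiseDisjoint
      (fun j => {x | rk x j = r} ∩ D) := by
    intro a _ b _ hab
    refine Set.disjoint_left.mpr ?_
    rintro x ⟨hxa, hxD⟩ ⟨hxb, _⟩
    obtain ⟨j, _, huniq⟩ := rk_existsUnique hxD hr
    exact hab ((huniq a hxa).trans (huniq b hxb).symm)
  have hsum : π D = ∑ j : Fin (n+1), π ({x | rk x j = r} ∩ D) := by
    conv_lhs => rw [hcover]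
    exact measure_biUnion_finset hdisj fun j _ => (measurableSet_rk_eq j r).inter hDm
  have hAD : ∀ j : Fin (n+1), π ({x | rk x j = r} ∩ D) = π {x | rk x (Fin.last n) = r} := by
    intro j
    rw [measure_inter_conull hDc, hsame j]
  have hπD : π D = 1 := (prob_compl_eq_zero_iff hDm).mp hDc
  rw [hπD] at hsum
  simp only [hAD] at hsum
  rw [Finset.sum_const, Finset.card_univ, Fintype.card_fin] at hsum
  have h1 : ((n+1 : ℕ) : ℝ≥0∞) * π {x | rk x (Fin.last n) = r} = 1 := by
    rw [hsum, nsmul_eq_mul]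
  set a := π {x | rk x (Fin.last n) = r}
  calc a = (((n+1:ℕ):ℝ≥0∞))⁻¹ * (((n+1:ℕ):ℝ≥0∞)) * a := by
        rw [ENNReal.inv_mul_cancel (by simp) (by simp), one_mul]
    _ = (((n+1:ℕ):ℝ≥0∞))⁻¹ * ((((n+1:ℕ):ℝ≥0∞)) * a) := mul_assoc _ _ _
    _ = (((n+1:ℕ):ℝ≥0∞))⁻¹ := by rw [h1, mul_one]

theorem rk_lt_measure {n : ℕ} (μ : Measure ℝ) [IsProbabilityMeasure μ]
    (hcont : ∀ x : ℝ, μ {x} = 0) {k : ℕ} (hk : k ≤ n + 1) :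
    Measure.pi (fun _ : Fin (n+1) => μ) {x | rk x (Fin.last n) < k}
      = (k : ℝ≥0∞) * (((n+1:ℕ):ℝ≥0∞))⁻¹ := by
  set π := Measure.pi (fun _ : Fin (n+1) => μ) with hπ
  have hcover : {x : Fin (n+1) → ℝ | rk x (Fin.last n) < k}
      = ⋃ r ∈ Finset.range k, {x | rk x (Fin.last n) = r} := by
    ext x
    simp [Set.mem_iUnion, Finset.mem_range]
  rw [hcover, measure_biUnion_finset]
  · rw [Finset.sum_congr rfl (fun r hr => rk_eq_measure μ hcont
      (lt_of_lt_of_le (Finset.mem_range.mp hr) hk))]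
    simp [Finset.sum_const, Finset.card_range]
  · intro a _ b _ hab
    refine Set.disjoint_left.mpr ?_
    rintro x hxa hxb
    exact hab (hxa.symm.trans hxb)
  · exact fun r _ => measurableSet_rk_eq _ r

theorem rk_last_eq {n : ℕ} (x : Fin (n+1) → ℝ) :
    rk x (Fin.last n)
      = (Finset.univ.filter fun i : Fin n => x i.castSucc < x (Fin.last n)).card := by
  unfold rk
  rw [Finset.card_filter, Finset.card_filter, Fin.sum_univ_castSucc]
  simp

end SCC

end Aux

/-- Two-sided split conformal coverage bound: for i.i.d. scores with a continuous
(atomless) common distribution `μ`, the coverage probability is sandwiched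
between `1 - α` and `1 - α + 1/(n+1)`. -/
theorem split_conformal_coverage_two_sided {Ω : Type*} [MeasurableSpace Ω]
    (P : Measure Ω) (hP : IsProbabilityMeasure P)
    (n : ℕ) (V : Fin (n + 1) → Ω → ℝ) (hV : ∀ i, Measurable (V i))
    (μ : Measure ℝ) (hμ : IsProbabilityMeasure μ)
    (hiid : P.map (fun ω => fun i => V i ω) = Measure.pi (fun _ : Fin (n + 1) => μ))
    (hcont : ∀ x : ℝ, μ {x} = 0)
    (α : ℝ) (hα : α ∈ Set.Ioo (0 : ℝ) 1)
    (hk : ⌈((n : ℝ) + 1) * (1 - α)⌉₊ ≤ n) :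
    1 - α ≤ (P {ω | V (Fin.last n) ω
        ≤ orderStat (fun i : Fin n => V i.castSucc ω) ⌈((n : ℝ) + 1) * (1 - α)⌉₊}).toReal
    ∧ (P {ω | V (Fin.last n) ω
        ≤ orderStat (fun i : Fin n => V i.castSucc ω) ⌈((n : ℝ) + 1) * (1 - α)⌉₊}).toReal
      ≤ 1 - α + 1 / ((n : ℝ) + 1) := by
  obtain ⟨hα0, hα1⟩ := hα
  set k := ⌈((n : ℝ) + 1) * (1 - α)⌉₊ with hkdef
  have hpos : (0:ℝ) < ((n : ℝ) + 1) * (1 - α) := by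
    have : (0:ℝ) < (n:ℝ) + 1 := by positivity
    nlinarith
  have hk1 : 1 ≤ k := Nat.one_le_iff_ne_zero.mpr (by
    intro h
    have := Nat.ceil_pos.mpr hpos
    omega)
  have hT : Measurable (fun ω => fun i : Fin (n+1) => V i ω) :=
    measurable_pi_lambda _ hV
  set S : Set (Fin (n+1) → ℝ) := {x | SCC.rk x (Fin.last n) < k} with hS
  have hSm : MeasurableSet S := by
    rw [hS]
    exact SCC.measurable_rk (Fin.last n) measurableSet_Iio
  have hEvent : {ω | V (Fin.last n) ω
      ≤ orderStat (fun i : Fin n => V i.castSucc ω) k}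
      = (fun ω => fun i : Fin (n+1) => V i ω) ⁻¹' S := by
    ext ω
    simp only [Set.mem_setOf_eq, Set.mem_preimage, hS]
    rw [SCC.le_orderStat_iff _ hk1 hk, SCC.rk_last_eq]
  have hPS : P {ω | V (Fin.last n) ω
      ≤ orderStat (fun i : Fin n => V i.castSucc ω) k}
      = (k : ℝ≥0∞) * (((n+1:ℕ):ℝ≥0∞))⁻¹ := by
    rw [hEvent, ← Measure.map_apply hT hSm, hiid, hS]
    exact SCC.rk_lt_measure μ hcont (by omega)
  rw [hPS]
  have htr : ((k : ℝ≥0∞) * (((n+1:ℕ):ℝ≥0∞))⁻¹).toReal = (k:ℝ) / ((n:ℝ)+1) := by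
    rw [ENNReal.toReal_mul, ENNReal.toReal_inv, ENNReal.toReal_natCast, ENNReal.toReal_natCast]
    push_cast
    ring
  rw [htr]
  have hnpos : (0:ℝ) < (n:ℝ) + 1 := by positivity
  have hle : ((n : ℝ) + 1) * (1 - α) ≤ (k:ℝ) := Nat.le_ceil _
  have hlt : (k:ℝ) < ((n : ℝ) + 1) * (1 - α) + 1 := Nat.ceil_lt_add_one (le_of_lt hpos)
  constructor
  · rw [le_div_iff₀ hnpos]
    nlinarith
  · rw [div_le_iff₀ hnpos]
    have : (1 - α + 1 / ((n : ℝ) + 1)) * ((n:ℝ) + 1)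
        = ((n : ℝ) + 1) * (1 - α) + 1 := by
      field_simp
    rw [this]
    linarith
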